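/- arXiv:2503.09469 — 7 statements merged into one kernel-verified Lean document; each statement's English description precedes it below -/
import Mathlib

section
/- Let μ₁ be the smallest eigenvalue of E[P]. For every ω ∈ [0, 2] and every vector ε ∈ ℝⁿ, (1/m)·∑ᵢ ‖(I − ωPᵢ)ε‖² ≤ B(ω)·‖ε‖², where B(ω) := 1 − ω(2 − ω)·μ₁ (the B-bound). -/
/-!
For an orthogonal projection `P`, `‖(I - ωP)ε‖² = ‖ε‖² - ω(2 - ω)⟪ε, Pε⟫` because `PᵀP = P`.
Averaging over `i` turns the last term into `ω(2 - ω)⟪ε, E[P]ε⟫`, and since `ω(2 - ω) ≥ 0` it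
suffices to bound the Rayleigh quotient of `E[P]` below by `μ₁`: `E[P] - μ₁I` is symmetric with
nonnegative eigenvalues, hence positive semidefinite.
-/

open Matrix

namespace Matrix

variable {ι : Type*} [Fintype ι] [DecidableEq ι]

theorem IsHermitian.mul_dotProduct_self_le_dotProduct_mulVec {A : Matrix ι ι ℝ} {μ : ℝ}
    (hA : A.IsHermitian)
    (hμ : μ ∈ lowerBounds {r : ℝ | ∃ v : ι → ℝ, v ≠ 0 ∧ A *ᵥ v = r • v}) (x : ι → ℝ) :
    μ * (x ⬝ᵥ x) ≤ x ⬝ᵥ (A *ᵥ x) := by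
  have hB : (A - μ • 1).IsHermitian := hA.sub (isHermitian_one.smul (.all μ))
  have hBpos : (A - μ • 1).PosSemidef := by
    refine hB.posSemidef_iff_eigenvalues_nonneg.mpr fun j => ?_
    have hv := hB.mulVec_eigenvectorBasis j
    have heig : A *ᵥ ⇑(hB.eigenvectorBasis j) =
        (hB.eigenvalues j + μ) • ⇑(hB.eigenvectorBasis j) := by
      rw [sub_mulVec, smul_mulVec, one_mulVec] at hv
      rw [add_smul, ← hv, sub_add_cancel]
    simpa using hμ ⟨_, by simpa using hB.eigenvectorBasis.orthonormal.ne_zero j, heig⟩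
  have hquad := hBpos.dotProduct_mulVec_nonneg x
  simp only [star_trivial, sub_mulVec, smul_mulVec, one_mulVec, dotProduct_sub,
    dotProduct_smul, smul_eq_mul] at hquad
  linarith

theorem dotProduct_self_mulVec_one_sub_smul {P : Matrix ι ι ℝ} (hPT : P.IsSymm)
    (hP : IsIdempotentElem P) (ω : ℝ) (x : ι → ℝ) :
    (1 - ω • P) *ᵥ x ⬝ᵥ (1 - ω • P) *ᵥ x = x ⬝ᵥ x - ω * (2 - ω) * (x ⬝ᵥ P *ᵥ x) := by
  have hPP : P *ᵥ x ⬝ᵥ P *ᵥ x = x ⬝ᵥ P *ᵥ x := by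
    rw [dotProduct_mulVec, vecMul_mulVec, hPT.eq, hP.eq, ← mulVec_transpose, hPT.eq,
      dotProduct_comm]
  rw [sub_mulVec, one_mulVec, smul_mulVec]
  simp only [sub_dotProduct, dotProduct_sub, smul_dotProduct, dotProduct_smul, smul_eq_mul, hPP,
    dotProduct_comm (P *ᵥ x) x]
  ring

end Matrix

/-- **the B-bound, one step.** Let `μ₁` be the smallest eigenvalue of
`E[P] := (1/m)∑ᵢ Pᵢ`. For every `ω ∈ [0, 2]` and every `ε ∈ ℝⁿ`,
`(1/m)·∑ᵢ ‖(I − ωPᵢ)ε‖² ≤ B(ω)·‖ε‖²` where `B(ω) := 1 − ω(2 − ω)·μ₁`. -/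
theorem stmt_3 {n m : ℕ} (hm : 0 < m)
    (P : Fin m → Matrix (Fin n) (Fin n) ℝ)
    (hPsym : ∀ i, (P i)ᵀ = P i) (hPproj : ∀ i, P i * P i = P i)
    (EP : Matrix (Fin n) (Fin n) ℝ) (hEP : EP = (1 / (m : ℝ)) • ∑ i, P i)
    (μ₁ : ℝ)
    (hμ₁ : IsLeast {r : ℝ | ∃ v : Fin n → ℝ, v ≠ 0 ∧ EP.mulVec v = r • v} μ₁)
    (ω : ℝ) (hω : ω ∈ Set.Icc (0 : ℝ) 2) (ε : Fin n → ℝ) :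
    (1 / (m : ℝ)) * ∑ i, ((1 - ω • P i).mulVec ε) ⬝ᵥ ((1 - ω • P i).mulVec ε)
      ≤ (1 - ω * (2 - ω) * μ₁) * (ε ⬝ᵥ ε) := by
  have hEP_herm : EP.IsHermitian := by
    rw [hEP, isHermitian_iff_isSymm]
    exact IsSymm.smul (by simp only [IsSymm, transpose_sum, hPsym]) _
  have hrayleigh := hEP_herm.mul_dotProduct_self_le_dotProduct_mulVec hμ₁.2 ε
  have hmean : (1 / (m : ℝ)) * ∑ i, ((1 - ω • P i) *ᵥ ε) ⬝ᵥ ((1 - ω • P i) *ᵥ ε)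
      = ε ⬝ᵥ ε - ω * (2 - ω) * (ε ⬝ᵥ EP *ᵥ ε) := by
    simp only [dotProduct_self_mulVec_one_sub_smul (hPsym _) (hPproj _), Finset.sum_sub_distrib,
      Finset.sum_const, Finset.card_univ, Fintype.card_fin, nsmul_eq_mul, ← Finset.mul_sum,
      ← dotProduct_sum, ← sum_mulVec, hEP, smul_mulVec, dotProduct_smul, smul_eq_mul]
    field_simp
  have hc : 0 ≤ ω * (2 - ω) := mul_nonneg hω.1 (by linarith [hω.2])
  rw [hmean]
  linarith [mul_le_mul_of_nonneg_left hrayleigh hc]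
end

section
/- Let μ₁ be the smallest eigenvalue of E[P] and B(ω) := 1 − ω(2 − ω)·μ₁. For every ω ∈ [0, 2], every ε₀ ∈ ℝⁿ, and every k ≥ 0, the average of the squared errors over all sequences of k uniformly chosen indices satisfies (1/mᵏ)·∑_{(i₁,…,i_k) ∈ {1,…,m}ᵏ} ‖(I − ωP_{i_k})⋯(I − ωP_{i₁})ε₀‖² ≤ B(ω)ᵏ·‖ε₀‖². -/
/-!
A single relaxed projection step `x ↦ (1 - ωP)x` with `P` an orthogonal projection shrinks the
squared norm by exactly `ω(2 - ω)⟪x, Px⟫`. Averaging over the `m` projections turns this into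
`‖x‖² - ω(2 - ω)⟪x, E[P]x⟫ ≤ B(ω)‖x‖²`, by the Rayleigh bound `μ₁‖x‖² ≤ ⟪x, E[P]x⟫`. Since
`B(ω) ≥ 0` (evaluate the averaged identity at an eigenvector for `μ₁`), the one-step bound iterates
along the sum over all index sequences, peeling off the first projection applied.
-/

open Matrix
open scoped MatrixOrder

theorem List.prod_reverse_ofFn_cons {κ M : Type*} [Monoid M] {k : ℕ} (f : κ → M) (i : κ)
    (t : Fin k → κ) :
    (List.ofFn fun j => f ((Fin.cons i t : Fin (k + 1) → κ) j)).reverse.prod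
      = (List.ofFn fun j => f (t j)).reverse.prod * f i := by
  simp [List.ofFn_succ]

namespace Matrix

variable {ι κ R : Type*} [Fintype ι] [DecidableEq ι] [Fintype κ]

theorem dotProduct_self_one_sub_smul_mulVec [CommRing R] {P : Matrix ι ι R} (hPsym : Pᵀ = P)
    (hPproj : P * P = P) (ω : R) (x : ι → R) :
    ((1 - ω • P) *ᵥ x) ⬝ᵥ ((1 - ω • P) *ᵥ x) = x ⬝ᵥ x - ω * (2 - ω) * (x ⬝ᵥ P *ᵥ x) := by
  have hPx : (P *ᵥ x) ⬝ᵥ (P *ᵥ x) = x ⬝ᵥ P *ᵥ x := by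
    conv_rhs => rw [← hPproj, ← mulVec_mulVec, dotProduct_mulVec, ← mulVec_transpose, hPsym]
  simp only [sub_mulVec, one_mulVec, smul_mulVec, sub_dotProduct, dotProduct_sub, smul_dotProduct,
    dotProduct_smul, smul_eq_mul, hPx, dotProduct_comm (P *ᵥ x) x]
  ring

theorem sum_dotProduct_self_one_sub_smul_mulVec [CommRing R] {P : κ → Matrix ι ι R}
    (hPsym : ∀ i, (P i)ᵀ = P i) (hPproj : ∀ i, P i * P i = P i) {EP : Matrix ι ι R}
    (hEP : ∑ i, P i = (Fintype.card κ : R) • EP) (ω : R) (x : ι → R) :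
    ∑ i, ((1 - ω • P i) *ᵥ x) ⬝ᵥ ((1 - ω • P i) *ᵥ x)
      = Fintype.card κ * (x ⬝ᵥ x - ω * (2 - ω) * (x ⬝ᵥ EP *ᵥ x)) := by
  have hsum : ∑ i, x ⬝ᵥ P i *ᵥ x = Fintype.card κ * (x ⬝ᵥ EP *ᵥ x) := by
    rw [← dotProduct_sum, ← sum_mulVec, hEP, smul_mulVec, dotProduct_smul, smul_eq_mul]
  simp only [dotProduct_self_one_sub_smul_mulVec (hPsym _) (hPproj _), Finset.sum_sub_distrib,
    Finset.sum_const, Finset.card_univ, nsmul_eq_mul, ← Finset.mul_sum, hsum]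
  ring

theorem IsHermitian.mul_dotProduct_self_le {A : Matrix ι ι ℝ} (hA : A.IsHermitian) {μ : ℝ}
    (hμ : μ ∈ lowerBounds {r : ℝ | ∃ v : ι → ℝ, v ≠ 0 ∧ A *ᵥ v = r • v}) (x : ι → ℝ) :
    μ * (x ⬝ᵥ x) ≤ x ⬝ᵥ A *ᵥ x := by
  have hle : algebraMap ℝ (Matrix ι ι ℝ) μ ≤ A := by
    rw [algebraMap_le_iff_le_spectrum (a := A) hA.isSelfAdjoint]
    intro r hr
    rw [← spectrum_toLin', ← Module.End.hasEigenvalue_iff_mem_spectrum] at hr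
    obtain ⟨v, hv⟩ := hr.exists_hasEigenvector
    exact hμ ⟨v, hv.2, hv.apply_eq_smul⟩
  simpa [Algebra.algebraMap_eq_smul_one, sub_mulVec, smul_mulVec, dotProduct_sub, dotProduct_smul]
    using (le_iff.mp hle).dotProduct_mulVec_nonneg x

theorem sum_dotProduct_self_one_sub_smul_mulVec_le [Nonempty κ] {P : κ → Matrix ι ι ℝ}
    (hPsym : ∀ i, (P i)ᵀ = P i) (hPproj : ∀ i, P i * P i = P i) {EP : Matrix ι ι ℝ}
    (hEP : ∑ i, P i = (Fintype.card κ : ℝ) • EP) {μ : ℝ}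
    (hμ : μ ∈ lowerBounds {r : ℝ | ∃ v : ι → ℝ, v ≠ 0 ∧ EP *ᵥ v = r • v}) {ω : ℝ}
    (hω : ω ∈ Set.Icc (0 : ℝ) 2) (x : ι → ℝ) :
    ∑ i, ((1 - ω • P i) *ᵥ x) ⬝ᵥ ((1 - ω • P i) *ᵥ x)
      ≤ Fintype.card κ * (1 - ω * (2 - ω) * μ) * (x ⬝ᵥ x) := by
  have hcard : (Fintype.card κ : ℝ) ≠ 0 := Nat.cast_ne_zero.mpr Fintype.card_ne_zero
  have hEPsymm : EP.IsHermitian := by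
    have hEP' : EP = (Fintype.card κ : ℝ)⁻¹ • ∑ i, P i := by
      rw [hEP, smul_smul, inv_mul_cancel₀ hcard, one_smul]
    rw [IsHermitian, conjTranspose_eq_transpose_of_trivial, hEP', transpose_smul, transpose_sum]
    simp only [hPsym]
  have hω' : 0 ≤ ω * (2 - ω) := mul_nonneg hω.1 (sub_nonneg.mpr hω.2)
  have hRayleigh := mul_le_mul_of_nonneg_left (hEPsymm.mul_dotProduct_self_le hμ x) hω'
  rw [sum_dotProduct_self_one_sub_smul_mulVec hPsym hPproj hEP, mul_assoc (Fintype.card κ : ℝ)]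
  exact mul_le_mul_of_nonneg_left (by linarith) (Nat.cast_nonneg _)

theorem one_sub_mul_eigenvalue_nonneg [Nonempty κ] {P : κ → Matrix ι ι ℝ}
    (hPsym : ∀ i, (P i)ᵀ = P i) (hPproj : ∀ i, P i * P i = P i) {EP : Matrix ι ι ℝ}
    (hEP : ∑ i, P i = (Fintype.card κ : ℝ) • EP) {μ : ℝ} {v : ι → ℝ} (hv : v ≠ 0)
    (hEPv : EP *ᵥ v = μ • v) (ω : ℝ) :
    0 ≤ 1 - ω * (2 - ω) * μ := by
  have hsum := sum_dotProduct_self_one_sub_smul_mulVec hPsym hPproj hEP ω v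
  rw [hEPv, dotProduct_smul, smul_eq_mul] at hsum
  have hnonneg : 0 ≤ (Fintype.card κ : ℝ) * ((1 - ω * (2 - ω) * μ) * (v ⬝ᵥ v)) := by
    rw [show (Fintype.card κ : ℝ) * ((1 - ω * (2 - ω) * μ) * (v ⬝ᵥ v))
      = Fintype.card κ * (v ⬝ᵥ v - ω * (2 - ω) * (μ * (v ⬝ᵥ v))) by ring, ← hsum]
    exact Finset.sum_nonneg fun i _ => dotProduct_self_star_nonneg _
  have hv' : 0 < v ⬝ᵥ v := by simpa using dotProduct_self_star_pos_iff.mpr hv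
  exact nonneg_of_mul_nonneg_left
    (nonneg_of_mul_nonneg_right hnonneg (Nat.cast_pos.mpr Fintype.card_pos)) hv'

theorem sum_ofFn_reverse_prod_mulVec_le [Semiring R] (M : κ → Matrix ι ι R) (Q : (ι → R) → ℝ)
    {c : ℝ} (hc : 0 ≤ c) (hQ : ∀ x, ∑ i, Q (M i *ᵥ x) ≤ c * Q x) (k : ℕ) (x : ι → R) :
    ∑ s : Fin k → κ, Q ((List.ofFn fun j => M (s j)).reverse.prod *ᵥ x) ≤ c ^ k * Q x := by
  induction k generalizing x with
  | zero => simp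
  | succ k ih =>
    calc ∑ s : Fin (k + 1) → κ, Q ((List.ofFn fun j => M (s j)).reverse.prod *ᵥ x)
        = ∑ i, ∑ t : Fin k → κ, Q ((List.ofFn fun j => M (t j)).reverse.prod *ᵥ (M i *ᵥ x)) := by
          rw [← (Fin.consEquiv fun _ => κ).sum_comp, Fintype.sum_prod_type]
          simp only [Fin.consEquiv_apply, List.prod_reverse_ofFn_cons, mulVec_mulVec]
      _ ≤ ∑ i, c ^ k * Q (M i *ᵥ x) := Finset.sum_le_sum fun i _ => ih _
      _ ≤ c ^ k * (c * Q x) := by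
          rw [← Finset.mul_sum]
          exact mul_le_mul_of_nonneg_left (hQ x) (pow_nonneg hc k)
      _ = c ^ (k + 1) * Q x := by ring

end Matrix

/-- **the B-bound, k steps.** Let `μ₁` be the smallest eigenvalue of
`E[P] := (1/m)∑ᵢ Pᵢ` and `B(ω) := 1 − ω(2 − ω)·μ₁`. For every `ω ∈ [0, 2]`, `ε₀ ∈ ℝⁿ` and
`k ≥ 0`, the average of `‖(I − ωP_{i_k})⋯(I − ωP_{i₁})ε₀‖²` over all sequences
`(i₁, …, i_k) ∈ {1, …, m}ᵏ` is at most `B(ω)ᵏ·‖ε₀‖²`. -/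
theorem stmt_4 {n m : ℕ} (hm : 0 < m)
    (P : Fin m → Matrix (Fin n) (Fin n) ℝ)
    (hPsym : ∀ i, (P i)ᵀ = P i) (hPproj : ∀ i, P i * P i = P i)
    (EP : Matrix (Fin n) (Fin n) ℝ) (hEP : EP = (1 / (m : ℝ)) • ∑ i, P i)
    (μ₁ : ℝ)
    (hμ₁ : IsLeast {r : ℝ | ∃ v : Fin n → ℝ, v ≠ 0 ∧ EP.mulVec v = r • v} μ₁)
    (ω : ℝ) (hω : ω ∈ Set.Icc (0 : ℝ) 2) (ε₀ : Fin n → ℝ) (k : ℕ) :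
    (1 / (m : ℝ) ^ k) * ∑ s : Fin k → Fin m,
        (((List.ofFn fun j : Fin k => (1 - ω • P (s j))).reverse.prod).mulVec ε₀) ⬝ᵥ
        (((List.ofFn fun j : Fin k => (1 - ω • P (s j))).reverse.prod).mulVec ε₀)
      ≤ (1 - ω * (2 - ω) * μ₁) ^ k * (ε₀ ⬝ᵥ ε₀) := by
  have hm' : (m : ℝ) ≠ 0 := Nat.cast_ne_zero.mpr hm.ne'
  have : Nonempty (Fin m) := ⟨⟨0, hm⟩⟩
  have hsum : ∑ i, P i = (Fintype.card (Fin m) : ℝ) • EP := by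
    rw [hEP, Fintype.card_fin, smul_smul, mul_one_div_cancel hm', one_smul]
  obtain ⟨⟨v, hv, hEPv⟩, hμ₁_le⟩ := hμ₁
  have hB := one_sub_mul_eigenvalue_nonneg hPsym hPproj hsum hv hEPv ω
  have hwords := sum_ofFn_reverse_prod_mulVec_le (fun i => 1 - ω • P i) (fun x => x ⬝ᵥ x)
    (mul_nonneg (Nat.cast_nonneg _) hB)
    (sum_dotProduct_self_one_sub_smul_mulVec_le hPsym hPproj hsum hμ₁_le hω) k ε₀
  rw [Fintype.card_fin, mul_pow] at hwords
  calc _ ≤ 1 / (m : ℝ) ^ k * ((m : ℝ) ^ k * (1 - ω * (2 - ω) * μ₁) ^ k * (ε₀ ⬝ᵥ ε₀)) := by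
        gcongr
    _ = _ := by field_simp
end

section
/- Every over-relaxation is at least as good as the corresponding under-relaxation: for every t ∈ [0, 1], the superoperator A(1−t) − A(1+t) is positive semidefinite, i.e., ⟨X, A(1−t)(X)⟩ ≥ ⟨X, A(1+t)(X)⟩ for every n×n matrix X; consequently λ_max(A(1−t)) ≥ λ_max(A(1+t)). -/
/-!
Write `S ω = 1 - ω • Q` for one of the projections `Q`. Expanding,
`S (1 - t) X S (1 - t) - S (1 + t) X S (1 + t) = 2t (QX + XQ - 2QXQ)`, and for a symmetric
idempotent `Q` one has `⟨X, QX + XQ - 2QXQ⟩ = ‖QX - XQ‖²`, which is nonnegative; averaging over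
the projections compares the two quadratic forms. For the eigenvalues, an eigenvector `X` of
`A (1 + t)` for `l₂` gives `l₂ ‖X‖² ≤ ⟨X, A (1 - t) X⟩`, and the Rayleigh quotient of the
self-adjoint operator `A (1 - t)` never exceeds its largest eigenvalue `l₁`.
-/

open Matrix

theorem one_sub_smul_sandwich_sub {R : Type*} [Ring R] [Algebra ℝ R] (q x : R) (t : ℝ) :
    (1 - (1 - t) • q) * x * (1 - (1 - t) • q) - (1 - (1 + t) • q) * x * (1 - (1 + t) • q) =
      (2 * t) • (q * x + x * q) - (4 * t) • (q * x * q) := by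
  simp only [sub_mul, mul_sub, one_mul, mul_one, smul_mul_assoc, mul_smul_comm]
  module

namespace LinearMap.IsSymmetric

variable {E : Type*} [NormedAddCommGroup E] [InnerProductSpace ℝ E] [FiniteDimensional ℝ E]
  {T : E →ₗ[ℝ] E}

theorem inner_apply_self_le_of_isGreatest (hT : T.IsSymmetric) {l : ℝ}
    (hl : IsGreatest {r | ∃ x, x ≠ 0 ∧ T x = r • x} l) (x : E) :
    inner ℝ (T x) x ≤ l * ‖x‖ ^ 2 := by
  obtain ⟨x₀, hx₀, -⟩ := hl.1
  have : Nontrivial E := ⟨⟨x₀, 0, hx₀⟩⟩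
  set μ := ⨆ y : { y : E // y ≠ 0 }, RCLike.re (inner ℝ (T y) y) / ‖(y : E)‖ ^ 2
  have hμl : μ ≤ l := by
    obtain ⟨v, hv⟩ := hT.hasEigenvalue_iSup_of_finiteDimensional.exists_hasEigenvector
    exact hl.2 ⟨v, hv.2, hv.apply_eq_smul⟩
  rcases eq_or_ne x 0 with rfl | hx
  · simp
  have hbdd : BddAbove (Set.range fun y : { y : E // y ≠ 0 } =>
      RCLike.re (inner ℝ (T y) y) / ‖(y : E)‖ ^ 2) :=
    ⟨‖T.toContinuousLinearMap‖, by
      rintro _ ⟨y, rfl⟩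
      exact (le_abs_self _).trans (T.toContinuousLinearMap.rayleighQuotient_le_norm y)⟩
  have hxμ := le_ciSup hbdd ⟨x, hx⟩
  rw [RCLike.re_to_real, div_le_iff₀ (by positivity)] at hxμ
  exact hxμ.trans (by gcongr)

end LinearMap.IsSymmetric

namespace Matrix

variable {m n : Type*} [Fintype m] [Fintype n]

noncomputable def frobeniusEquiv : Matrix m n ℝ ≃ₗ[ℝ] EuclideanSpace ℝ (m × n) where
  toFun X := WithLp.toLp 2 fun p => X p.1 p.2
  invFun v := Matrix.of fun i j => v (i, j)
  map_add' _ _ := rfl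
  map_smul' _ _ := rfl
  left_inv _ := rfl
  right_inv _ := rfl

theorem inner_frobeniusEquiv (X Y : Matrix m n ℝ) :
    inner ℝ (frobeniusEquiv X) (frobeniusEquiv Y) = (Xᵀ * Y).trace := by
  simp only [PiLp.inner_apply, RCLike.inner_apply, conj_trivial, trace, diag_apply, mul_apply,
    transpose_apply, mul_comm]
  rw [Fintype.sum_prod_type, Finset.sum_comm]
  rfl

theorem isSymmetric_conj_frobeniusEquiv {L : Module.End ℝ (Matrix n n ℝ)}
    (hL : ∀ X Y, ((L X)ᵀ * Y).trace = (Xᵀ * L Y).trace) :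
    (frobeniusEquiv.conj L).IsSymmetric := by
  intro x y
  obtain ⟨X, rfl⟩ := frobeniusEquiv.surjective x
  obtain ⟨Y, rfl⟩ := frobeniusEquiv.surjective y
  simp only [LinearEquiv.conj_apply_apply, LinearEquiv.symm_apply_apply, inner_frobeniusEquiv, hL]

theorem trace_transpose_mul_le_of_isGreatest {L : Module.End ℝ (Matrix n n ℝ)}
    (hL : ∀ X Y, ((L X)ᵀ * Y).trace = (Xᵀ * L Y).trace) {l : ℝ}
    (hl : IsGreatest {r | ∃ X, X ≠ 0 ∧ L X = r • X} l) (X : Matrix n n ℝ) :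
    (Xᵀ * L X).trace ≤ l * (Xᵀ * X).trace := by
  have hl' : IsGreatest {r | ∃ x, x ≠ 0 ∧ frobeniusEquiv.conj L x = r • x} l := by
    convert hl using 3 with r
    refine ⟨fun ⟨x, hx, hLx⟩ => ⟨frobeniusEquiv.symm x, by simpa using hx, ?_⟩,
      fun ⟨Y, hY, hLY⟩ => ⟨frobeniusEquiv Y, by simpa using hY, by simp [hLY]⟩⟩
    simpa using congrArg frobeniusEquiv.symm hLx
  have := LinearMap.IsSymmetric.inner_apply_self_le_of_isGreatest
    (isSymmetric_conj_frobeniusEquiv hL) hl' (frobeniusEquiv X)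
  rwa [← real_inner_self_eq_norm_sq, LinearEquiv.conj_apply_apply, LinearEquiv.symm_apply_apply,
    real_inner_comm, inner_frobeniusEquiv, inner_frobeniusEquiv] at this

theorem trace_transpose_mul_self_nonneg (X : Matrix m n ℝ) : 0 ≤ (Xᵀ * X).trace :=
  inner_frobeniusEquiv X X ▸ real_inner_self_nonneg

theorem trace_transpose_mul_self_pos {X : Matrix m n ℝ} (hX : X ≠ 0) : 0 < (Xᵀ * X).trace :=
  inner_frobeniusEquiv X X ▸ real_inner_self_pos.2 (by simpa using hX)

theorem trace_transpose_sandwich_mul {S : Matrix n n ℝ} (hS : Sᵀ = S) (X Y : Matrix n n ℝ) :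
    ((S * X * S)ᵀ * Y).trace = (Xᵀ * (S * Y * S)).trace := by
  rw [transpose_mul, transpose_mul, hS, mul_assoc, trace_mul_comm, ← mul_assoc, ← mul_assoc,
    mul_assoc]

theorem trace_transpose_mul_commutator {Q : Matrix n n ℝ} (hQs : Qᵀ = Q) (hQp : Q * Q = Q)
    (X : Matrix n n ℝ) :
    (Xᵀ * (Q * X + X * Q)).trace - 2 * (Xᵀ * (Q * X * Q)).trace =
      ((Q * X - X * Q)ᵀ * (Q * X - X * Q)).trace := by
  set D := Q * X - X * Q
  have hD : Q * D - D * Q = Q * X + X * Q - (2 : ℝ) • (Q * X * Q) := by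
    simp only [D, mul_sub, sub_mul, ← mul_assoc, hQp, mul_assoc _ Q Q, two_smul]
    abel
  have hDt : Dᵀ = Xᵀ * Q - Q * Xᵀ := by
    simp only [D, transpose_sub, transpose_mul, hQs]
  calc (Xᵀ * (Q * X + X * Q)).trace - 2 * (Xᵀ * (Q * X * Q)).trace
      = (Xᵀ * (Q * D - D * Q)).trace := by
        rw [hD, mul_sub, trace_sub, Matrix.mul_smul, trace_smul, smul_eq_mul]
    _ = ((Xᵀ * Q) * D).trace - (Q * Xᵀ * D).trace := by
        rw [mul_sub, trace_sub, ← mul_assoc, ← mul_assoc, trace_mul_comm (Xᵀ * D), ← mul_assoc]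
    _ = (Dᵀ * D).trace := by rw [hDt, sub_mul, trace_sub]

theorem trace_transpose_mul_sandwich_le [DecidableEq n] {Q : Matrix n n ℝ} (hQs : Qᵀ = Q)
    (hQp : Q * Q = Q) {t : ℝ} (ht : 0 ≤ t) (X : Matrix n n ℝ) :
    (Xᵀ * ((1 - (1 + t) • Q) * X * (1 - (1 + t) • Q))).trace ≤
      (Xᵀ * ((1 - (1 - t) • Q) * X * (1 - (1 - t) • Q))).trace := by
  have key : (Xᵀ * ((1 - (1 - t) • Q) * X * (1 - (1 - t) • Q))).trace -
      (Xᵀ * ((1 - (1 + t) • Q) * X * (1 - (1 + t) • Q))).trace =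
        2 * t * ((Q * X - X * Q)ᵀ * (Q * X - X * Q)).trace := by
    rw [← trace_sub, ← mul_sub, one_sub_smul_sandwich_sub, ← trace_transpose_mul_commutator hQs hQp,
      mul_sub, trace_sub, Matrix.mul_smul, Matrix.mul_smul, trace_smul, trace_smul, smul_eq_mul,
      smul_eq_mul]
    ring
  exact sub_nonneg.1 (key ▸ mul_nonneg (by positivity) (trace_transpose_mul_self_nonneg _))

end Matrix

section Relaxation

variable {ι n : Type*} [Fintype ι] [Fintype n] [DecidableEq n]

noncomputable def relaxationOperator (P : ι → Matrix n n ℝ) (ω : ℝ) : Module.End ℝ (Matrix n n ℝ) :=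
  (1 / (Fintype.card ι : ℝ)) •
    ∑ i, LinearMap.mulLeft ℝ (1 - ω • P i) ∘ₗ LinearMap.mulRight ℝ (1 - ω • P i)

theorem relaxationOperator_apply (P : ι → Matrix n n ℝ) (ω : ℝ) (X : Matrix n n ℝ) :
    relaxationOperator P ω X =
      (1 / (Fintype.card ι : ℝ)) • ∑ i, (1 - ω • P i) * X * (1 - ω • P i) := by
  simp [relaxationOperator, mul_assoc]

theorem trace_transpose_relaxationOperator_mul {P : ι → Matrix n n ℝ} (hP : ∀ i, (P i)ᵀ = P i)
    (ω : ℝ) (X Y : Matrix n n ℝ) :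
    ((relaxationOperator P ω X)ᵀ * Y).trace = (Xᵀ * relaxationOperator P ω Y).trace := by
  have hS : ∀ i, (1 - ω • P i)ᵀ = 1 - ω • P i := fun i => by
    rw [transpose_sub, transpose_one, transpose_smul, hP]
  simp only [relaxationOperator_apply, transpose_smul, transpose_sum, Matrix.smul_mul,
    Matrix.mul_smul, Finset.sum_mul, Finset.mul_sum, trace_smul, trace_sum,
    trace_transpose_sandwich_mul (hS _)]

theorem trace_transpose_mul_relaxationOperator_le {P : ι → Matrix n n ℝ}
    (hPs : ∀ i, (P i)ᵀ = P i) (hPp : ∀ i, P i * P i = P i) {t : ℝ} (ht : 0 ≤ t)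
    (X : Matrix n n ℝ) :
    (Xᵀ * relaxationOperator P (1 + t) X).trace ≤ (Xᵀ * relaxationOperator P (1 - t) X).trace := by
  simp only [relaxationOperator_apply, Matrix.mul_smul, Finset.mul_sum, trace_smul, trace_sum,
    smul_eq_mul]
  gcongr with i
  exact trace_transpose_mul_sandwich_le (hPs i) (hPp i) ht X

end Relaxation

theorem stmt_5_general {n m : ℕ}
    (P : Fin m → Matrix (Fin n) (Fin n) ℝ)
    (hPsym : ∀ i, (P i)ᵀ = P i) (hPproj : ∀ i, P i * P i = P i)
    (A : ℝ → Matrix (Fin n) (Fin n) ℝ → Matrix (Fin n) (Fin n) ℝ)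
    (hA : ∀ ω X, A ω X = (1 / (m : ℝ)) • ∑ i, (1 - ω • P i) * X * (1 - ω • P i))
    (t : ℝ) (ht : t ∈ Set.Icc (0 : ℝ) 1) :
    (∀ X : Matrix (Fin n) (Fin n) ℝ,
        (Xᵀ * A (1 + t) X).trace ≤ (Xᵀ * A (1 - t) X).trace) ∧
    (∀ l₁ l₂ : ℝ,
        IsGreatest {r : ℝ | ∃ X : Matrix (Fin n) (Fin n) ℝ, X ≠ 0 ∧ A (1 - t) X = r • X} l₁ →
        IsGreatest {r : ℝ | ∃ X : Matrix (Fin n) (Fin n) ℝ, X ≠ 0 ∧ A (1 + t) X = r • X} l₂ →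
        l₂ ≤ l₁) := by
  have hA' : A = fun ω => ⇑(relaxationOperator P ω) := by
    funext ω X
    rw [hA, relaxationOperator_apply, Fintype.card_fin]
  subst hA'
  beta_reduce
  have hquad := trace_transpose_mul_relaxationOperator_le hPsym hPproj ht.1
  refine ⟨hquad, fun l₁ l₂ hl₁ hl₂ => ?_⟩
  obtain ⟨X, hX, hXl₂⟩ := hl₂.1
  have hle := trace_transpose_mul_le_of_isGreatest
    (trace_transpose_relaxationOperator_mul hPsym (1 - t)) hl₁ X
  have hquadX := hquad X
  rw [hXl₂, Matrix.mul_smul, trace_smul, smul_eq_mul] at hquadX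
  exact le_of_mul_le_mul_right (hquadX.trans hle) (trace_transpose_mul_self_pos hX)

/-- For the superoperator `A(ω)(X) := (1/m)∑ᵢ (I − ωPᵢ)X(I − ωPᵢ)` and every
`t ∈ [0, 1]`, the superoperator `A(1−t) − A(1+t)` is positive semidefinite for the Frobenius
inner product, i.e. `⟨X, A(1−t)(X)⟩ ≥ ⟨X, A(1+t)(X)⟩` for every `X`; consequently
`λ_max(A(1−t)) ≥ λ_max(A(1+t))`. -/
theorem stmt_5 {n m : ℕ} (hm : 0 < m)
    (P : Fin m → Matrix (Fin n) (Fin n) ℝ)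
    (hPsym : ∀ i, (P i)ᵀ = P i) (hPproj : ∀ i, P i * P i = P i)
    (A : ℝ → Matrix (Fin n) (Fin n) ℝ → Matrix (Fin n) (Fin n) ℝ)
    (hA : ∀ ω X, A ω X = (1 / (m : ℝ)) • ∑ i, (1 - ω • P i) * X * (1 - ω • P i))
    (t : ℝ) (ht : t ∈ Set.Icc (0 : ℝ) 1) :
    (∀ X : Matrix (Fin n) (Fin n) ℝ,
        (Xᵀ * A (1 + t) X).trace ≤ (Xᵀ * A (1 - t) X).trace) ∧
    (∀ l₁ l₂ : ℝ,
        IsGreatest {r : ℝ | ∃ X : Matrix (Fin n) (Fin n) ℝ, X ≠ 0 ∧ A (1 - t) X = r • X} l₁ →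
        IsGreatest {r : ℝ | ∃ X : Matrix (Fin n) (Fin n) ℝ, X ≠ 0 ∧ A (1 + t) X = r • X} l₂ →
        l₂ ≤ l₁) :=
  stmt_5_general P hPsym hPproj A hA t ht
end

section
/- For every ω ∈ [0, 2] and every index i, the i-th smallest eigenvalue (counted with multiplicity) of the self-adjoint superoperator B − ωC is at least (1 − ω/2) times the i-th smallest eigenvalue of B: λᵢ(B − ωC) ≥ (1 − ω/2)·λᵢ(B). -/
/-!
Courant–Fischer comparison. For a fixed index `i`, the span of the eigenvectors of `B` with index
`≥ i` (dimension `n² − i`) and the span of the eigenvectors of `B − ωC` with index `≤ i`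
(dimension `i + 1`) meet in some `X ≠ 0`. On the first span the Rayleigh quotient of `B` is at
least `λᵢ(B)`, on the second that of `B − ωC` is at most `λᵢ(B − ωC)`. For an orthogonal
projection `P` one has `⟨X, PX + XP⟩ − 2⟨X, PXP⟩ = ‖PX − XP‖² ≥ 0`, so `2C ≤ B` in the Loewner
order and hence `B − ωC ≥ (1 − ω/2) B` for `ω ∈ [0, 2]`; comparing the two Rayleigh quotients at
`X` gives the claim.
-/

open Matrix Module

section Dimension

variable {K E : Type*} [Field K] [AddCommGroup E] [Module K E]

theorem LinearIndependent.finrank_span_image_finset {ι : Type*} {v : ι → E}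
    (hv : LinearIndependent K v) (s : Finset ι) :
    finrank K (Submodule.span K (v '' s)) = s.card := by
  rw [Set.image_eq_range]
  exact (finrank_span_eq_card (hv.comp _ Subtype.val_injective)).trans (by simp)

theorem exists_ne_zero_mem_span_Ici_mem_span_Iic [FiniteDimensional K E] {N : ℕ}
    (hN : finrank K E = N) {v w : Fin N → E} (hv : LinearIndependent K v)
    (hw : LinearIndependent K w) (i : Fin N) :
    ∃ x ≠ 0, x ∈ Submodule.span K (v '' Finset.Ici i) ∧
      x ∈ Submodule.span K (w '' Finset.Iic i) := by
  set S := Submodule.span K (v '' Finset.Ici i)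
  set T := Submodule.span K (w '' Finset.Iic i)
  have hS : finrank K S = N - i := by rw [hv.finrank_span_image_finset, Fin.card_Ici]
  have hT : finrank K T = i + 1 := by rw [hw.finrank_span_image_finset, Fin.card_Iic]
  have hsup : finrank K ↑(S ⊔ T) ≤ N := hN ▸ Submodule.finrank_le _
  have hdim := Submodule.finrank_sup_add_finrank_inf_eq S T
  have hinf : S ⊓ T ≠ ⊥ := by
    rw [Ne, ← Submodule.finrank_eq_zero]
    omega
  obtain ⟨x, hx, hx0⟩ := (Submodule.ne_bot_iff _).1 hinf
  exact ⟨x, hx0, Submodule.mem_inf.1 hx⟩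

end Dimension

namespace LinearMap.BilinForm

variable {E ι : Type*} [AddCommGroup E] [Module ℝ E] [DecidableEq ι]

def IsOrthonormal (b : LinearMap.BilinForm ℝ E) (v : ι → E) : Prop :=
  ∀ i j, b (v i) (v j) = if i = j then 1 else 0

namespace IsOrthonormal

variable {b : LinearMap.BilinForm ℝ E} {v : ι → E}

theorem linearIndependent (hv : b.IsOrthonormal v) : LinearIndependent ℝ v :=
  linearIndependent_of_isOrthoᵢ (B := b) (isOrthoᵢ_def.2 fun i j hij => by simp [hv i j, hij])
    fun i => by simp [hv i i]

theorem apply_sum_smul_map_sum_smul (hv : b.IsOrthonormal v) {f : E →ₗ[ℝ] E} {μ : ι → ℝ}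
    (hf : ∀ k, f (v k) = μ k • v k) (s : Finset ι) (c : ι → ℝ) :
    b (∑ k ∈ s, c k • v k) (f (∑ k ∈ s, c k • v k)) = ∑ k ∈ s, μ k * c k ^ 2 := by
  simp only [map_sum, map_smul, hf, LinearMap.sum_apply, LinearMap.smul_apply, smul_eq_mul, hv _ _]
  refine Finset.sum_congr rfl fun k hk => ?_
  simp only [mul_ite, mul_one, mul_zero, Finset.sum_ite_eq', hk, ↓reduceIte]
  ring

theorem apply_sum_smul_self (hv : b.IsOrthonormal v) (s : Finset ι) (c : ι → ℝ) :
    b (∑ k ∈ s, c k • v k) (∑ k ∈ s, c k • v k) = ∑ k ∈ s, c k ^ 2 := by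
  simpa using hv.apply_sum_smul_map_sum_smul (f := LinearMap.id) (μ := 1) (by simp) s c

theorem apply_le_mul_self_of_mem_span (hv : b.IsOrthonormal v) {f : E →ₗ[ℝ] E} {μ : ι → ℝ}
    (hf : ∀ k, f (v k) = μ k • v k) {s : Finset ι} {t : ℝ} (ht : ∀ k ∈ s, μ k ≤ t) {x : E}
    (hx : x ∈ Submodule.span ℝ (v '' s)) : b x (f x) ≤ t * b x x := by
  obtain ⟨c, rfl⟩ := (Submodule.mem_span_image_finset_iff_exists_fun' ℝ).1 hx
  rw [hv.apply_sum_smul_map_sum_smul hf, hv.apply_sum_smul_self, Finset.mul_sum]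
  exact Finset.sum_le_sum fun k hk => mul_le_mul_of_nonneg_right (ht k hk) (sq_nonneg _)

theorem mul_self_le_apply_of_mem_span (hv : b.IsOrthonormal v) {f : E →ₗ[ℝ] E} {μ : ι → ℝ}
    (hf : ∀ k, f (v k) = μ k • v k) {s : Finset ι} {t : ℝ} (ht : ∀ k ∈ s, t ≤ μ k) {x : E}
    (hx : x ∈ Submodule.span ℝ (v '' s)) : t * b x x ≤ b x (f x) := by
  obtain ⟨c, rfl⟩ := (Submodule.mem_span_image_finset_iff_exists_fun' ℝ).1 hx
  rw [hv.apply_sum_smul_map_sum_smul hf, hv.apply_sum_smul_self, Finset.mul_sum]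
  exact Finset.sum_le_sum fun k hk => mul_le_mul_of_nonneg_right (ht k hk) (sq_nonneg _)

theorem apply_self_pos_of_mem_span (hv : b.IsOrthonormal v) {s : Finset ι} {x : E}
    (hx : x ∈ Submodule.span ℝ (v '' s)) (hx0 : x ≠ 0) : 0 < b x x := by
  obtain ⟨c, rfl⟩ := (Submodule.mem_span_image_finset_iff_exists_fun' ℝ).1 hx
  rw [hv.apply_sum_smul_self]
  refine (Finset.sum_nonneg fun k _ => sq_nonneg _).lt_of_ne fun h => hx0 ?_
  rw [eq_comm, Finset.sum_eq_zero_iff_of_nonneg fun k _ => sq_nonneg _] at h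
  exact Finset.sum_eq_zero fun k hk => by simp [pow_eq_zero_iff two_ne_zero |>.1 (h k hk)]

theorem mul_le_of_forall_mul_apply_le [FiniteDimensional ℝ E] {N : ℕ} (hN : finrank ℝ E = N)
    {v w : Fin N → E} (hv : b.IsOrthonormal v) (hw : b.IsOrthonormal w) {f g : E →ₗ[ℝ] E}
    {μ ν : Fin N → ℝ} (hμ : Monotone μ) (hν : Monotone ν) (hf : ∀ k, f (v k) = μ k • v k)
    (hg : ∀ k, g (w k) = ν k • w k) {c : ℝ} (hc : 0 ≤ c) (hfg : ∀ x, c * b x (f x) ≤ b x (g x))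
    (i : Fin N) : c * μ i ≤ ν i := by
  obtain ⟨x, hx0, hxv, hxw⟩ :=
    exists_ne_zero_mem_span_Ici_mem_span_Iic hN hv.linearIndependent hw.linearIndependent i
  have hlow : μ i * b x x ≤ b x (f x) :=
    hv.mul_self_le_apply_of_mem_span hf (fun k hk => hμ (Finset.mem_Ici.1 hk)) hxv
  have hup : b x (g x) ≤ ν i * b x x :=
    hw.apply_le_mul_self_of_mem_span hg (fun k hk => hν (Finset.mem_Iic.1 hk)) hxw
  refine le_of_mul_le_mul_right ?_ (hw.apply_self_pos_of_mem_span hxw hx0)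
  calc c * μ i * b x x = c * (μ i * b x x) := mul_assoc _ _ _
    _ ≤ c * b x (f x) := mul_le_mul_of_nonneg_left hlow hc
    _ ≤ b x (g x) := hfg x
    _ ≤ ν i * b x x := hup

end IsOrthonormal

end LinearMap.BilinForm

namespace Matrix

variable {ι : Type*} [Fintype ι]

def frobeniusForm : LinearMap.BilinForm ℝ (Matrix ι ι ℝ) :=
  LinearMap.mk₂ ℝ (fun X Y => (Xᵀ * Y).trace)
    (fun X X' Y => by simp [Matrix.add_mul, trace_add])
    (fun c X Y => by simp)
    (fun X Y Y' => by simp [Matrix.mul_add, trace_add])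
    (fun c X Y => by simp)

@[simp]
theorem frobeniusForm_apply (X Y : Matrix ι ι ℝ) : frobeniusForm X Y = (Xᵀ * Y).trace := rfl

theorem frobeniusForm_self_nonneg (X : Matrix ι ι ℝ) : 0 ≤ frobeniusForm X X := by
  simpa using (posSemidef_conjTranspose_mul_self X).trace_nonneg

theorem frobeniusForm_mul_left (A X Y : Matrix ι ι ℝ) :
    frobeniusForm (A * X) Y = frobeniusForm X (Aᵀ * Y) := by
  simp [Matrix.mul_assoc]

theorem frobeniusForm_mul_right (A X Y : Matrix ι ι ℝ) :
    frobeniusForm (X * A) Y = frobeniusForm X (Y * Aᵀ) := by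
  rw [frobeniusForm_apply, frobeniusForm_apply, transpose_mul, Matrix.mul_assoc, trace_mul_comm,
    Matrix.mul_assoc]

theorem two_mul_frobeniusForm_conj_le {P : Matrix ι ι ℝ} (hPsym : Pᵀ = P) (hPproj : P * P = P)
    (X : Matrix ι ι ℝ) : 2 * frobeniusForm X (P * X * P) ≤ frobeniusForm X (P * X + X * P) := by
  have key : frobeniusForm (P * X - X * P) (P * X - X * P) =
      frobeniusForm X (P * X + X * P) - 2 * frobeniusForm X (P * X * P) := by
    rw [map_sub frobeniusForm, LinearMap.sub_apply, frobeniusForm_mul_left,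
      frobeniusForm_mul_right, hPsym, Matrix.mul_sub, Matrix.sub_mul, ← Matrix.mul_assoc P P,
      hPproj, Matrix.mul_assoc X P P, hPproj, ← Matrix.mul_assoc P X P]
    simp only [map_sub, map_add]
    ring
  linarith [frobeniusForm_self_nonneg (P * X - X * P)]

theorem two_mul_frobeniusForm_sum_conj_le {κ : Type*} (s : Finset κ) {P : κ → Matrix ι ι ℝ}
    (hPsym : ∀ i ∈ s, (P i)ᵀ = P i) (hPproj : ∀ i ∈ s, P i * P i = P i) (X : Matrix ι ι ℝ) :
    2 * frobeniusForm X (∑ i ∈ s, P i * X * P i) ≤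
      frobeniusForm X ((∑ i ∈ s, P i) * X + X * ∑ i ∈ s, P i) := by
  rw [map_sum, Finset.mul_sum, Matrix.sum_mul, Matrix.mul_sum, ← Finset.sum_add_distrib, map_sum]
  exact Finset.sum_le_sum fun i hi => two_mul_frobeniusForm_conj_le (hPsym i hi) (hPproj i hi) X

end Matrix

theorem stmt_7_general {n m : ℕ}
    (P : Fin m → Matrix (Fin n) (Fin n) ℝ)
    (hPsym : ∀ i, (P i)ᵀ = P i) (hPproj : ∀ i, P i * P i = P i)
    (EP : Matrix (Fin n) (Fin n) ℝ) (hEP : EP = (1 / (m : ℝ)) • ∑ i, P i)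
    (B C : Matrix (Fin n) (Fin n) ℝ → Matrix (Fin n) (Fin n) ℝ)
    (hB : ∀ X, B X = EP * X + X * EP)
    (hC : ∀ X, C X = (1 / (m : ℝ)) • ∑ i, P i * X * P i)
    (ω : ℝ) (hω : ω ∈ Set.Icc (0 : ℝ) 2)
    (μB μBC : Fin (n * n) → ℝ) (hμBmono : Monotone μB) (hμBCmono : Monotone μBC)
    (V W : Fin (n * n) → Matrix (Fin n) (Fin n) ℝ)
    (hVorth : ∀ i j, ((V i)ᵀ * V j).trace = if i = j then (1 : ℝ) else 0)
    (hWorth : ∀ i j, ((W i)ᵀ * W j).trace = if i = j then (1 : ℝ) else 0)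
    (hVeig : ∀ i, B (V i) = μB i • V i)
    (hWeig : ∀ i, B (W i) - ω • C (W i) = μBC i • W i) :
    ∀ i : Fin (n * n), (1 - ω / 2) * μB i ≤ μBC i := by
  obtain ⟨hω0, hω2⟩ := hω
  let LB : Matrix (Fin n) (Fin n) ℝ →ₗ[ℝ] Matrix (Fin n) (Fin n) ℝ :=
    LinearMap.mulLeft ℝ EP + LinearMap.mulRight ℝ EP
  let LC : Matrix (Fin n) (Fin n) ℝ →ₗ[ℝ] Matrix (Fin n) (Fin n) ℝ :=
    (1 / (m : ℝ)) • ∑ i, LinearMap.mulLeft ℝ (P i) ∘ₗ LinearMap.mulRight ℝ (P i)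
  have hLB (X) : LB X = B X := by simp [LB, hB]
  have hLC (X) : LC X = C X := by simp [LC, hC, Matrix.mul_assoc]
  have hCB (X) : 2 * frobeniusForm X (C X) ≤ frobeniusForm X (B X) := by
    rw [hB, hC, hEP, Matrix.smul_mul, Matrix.mul_smul, ← smul_add, map_smul, map_smul, smul_eq_mul,
      smul_eq_mul, mul_left_comm]
    exact mul_le_mul_of_nonneg_left (two_mul_frobeniusForm_sum_conj_le _
      (fun i _ => hPsym i) (fun i _ => hPproj i) X) (by positivity)
  intro i
  refine LinearMap.BilinForm.IsOrthonormal.mul_le_of_forall_mul_apply_le (b := frobeniusForm)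
    (v := V) (w := W) (f := LB) (g := LB - ω • LC) (by simp [finrank_matrix]) hVorth hWorth hμBmono
    hμBCmono (fun k => by rw [hLB, hVeig])
    (fun k => by rw [LinearMap.sub_apply, LinearMap.smul_apply, hLB, hLC, hWeig]) (by linarith)
    (fun X => ?_) i
  simp only [LinearMap.sub_apply, LinearMap.smul_apply, hLB, hLC, map_sub, map_smul, smul_eq_mul]
  linarith [mul_nonneg hω0 (sub_nonneg.2 (hCB X))]

/-- **the B-bound, eigenvalue-wise.** Let `μB` (resp. `μBC`) be the ascending
enumeration, with multiplicity, of the eigenvalues of the self-adjoint superoperator `B`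
(resp. `B − ωC`) on the `n²`-dimensional space of `n × n` matrices with the Frobenius inner
product — encoded by monotone families of eigenvalues attached to Frobenius-orthonormal
eigenbases. Then for every `ω ∈ [0, 2]` and every index `i`,
`λᵢ(B − ωC) ≥ (1 − ω/2)·λᵢ(B)`. -/
theorem stmt_7 {n m : ℕ} (hm : 0 < m)
    (P : Fin m → Matrix (Fin n) (Fin n) ℝ)
    (hPsym : ∀ i, (P i)ᵀ = P i) (hPproj : ∀ i, P i * P i = P i)
    (EP : Matrix (Fin n) (Fin n) ℝ) (hEP : EP = (1 / (m : ℝ)) • ∑ i, P i)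
    (B C : Matrix (Fin n) (Fin n) ℝ → Matrix (Fin n) (Fin n) ℝ)
    (hB : ∀ X, B X = EP * X + X * EP)
    (hC : ∀ X, C X = (1 / (m : ℝ)) • ∑ i, P i * X * P i)
    (ω : ℝ) (hω : ω ∈ Set.Icc (0 : ℝ) 2)
    (μB μBC : Fin (n * n) → ℝ) (hμBmono : Monotone μB) (hμBCmono : Monotone μBC)
    (V W : Fin (n * n) → Matrix (Fin n) (Fin n) ℝ)
    (hVorth : ∀ i j, ((V i)ᵀ * V j).trace = if i = j then (1 : ℝ) else 0)
    (hWorth : ∀ i j, ((W i)ᵀ * W j).trace = if i = j then (1 : ℝ) else 0)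
    (hVeig : ∀ i, B (V i) = μB i • V i)
    (hWeig : ∀ i, B (W i) - ω • C (W i) = μBC i • W i) :
    ∀ i : Fin (n * n), (1 - ω / 2) * μB i ≤ μBC i :=
  stmt_7_general P hPsym hPproj EP hEP B C hB hC ω hω μB μBC hμBmono hμBCmono V W hVorth hWorth
    hVeig hWeig
end

section
/- The superoperator B − 2C annihilates the identity matrix, B(I) − 2C(I) = 0, and its smallest eigenvalue is exactly 0; i.e., ⟨X, (B − 2C)(X)⟩ ≥ 0 for all n×n matrices X, with equality attained at X = I. -/
open Matrix

lemma aux_trace_sq_nonneg {n : ℕ} (A : Matrix (Fin n) (Fin n) ℝ) :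
    0 ≤ (Aᵀ * A).trace := by
  rw [Matrix.trace]
  apply Finset.sum_nonneg
  intro i _
  rw [Matrix.diag_apply, Matrix.mul_apply]
  apply Finset.sum_nonneg
  intro j _
  rw [Matrix.transpose_apply]
  exact mul_self_nonneg _

lemma aux_trace_sq_eq_zero {n : ℕ} (X : Matrix (Fin n) (Fin n) ℝ)
    (h : (Xᵀ * X).trace = 0) : X = 0 := by
  have hsum : ∑ k : Fin n, ∑ l : Fin n, X l k * X l k = 0 := by
    rw [← h, Matrix.trace]
    simp [Matrix.diag, Matrix.mul_apply]
  ext i j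
  have hk := (Finset.sum_eq_zero_iff_of_nonneg (fun k _ =>
    Finset.sum_nonneg (fun l _ => mul_self_nonneg (X l k)))).mp hsum j (Finset.mem_univ j)
  have := (Finset.sum_eq_zero_iff_of_nonneg (fun l _ =>
    mul_self_nonneg (X l j))).mp hk i (Finset.mem_univ i)
  simpa using mul_self_eq_zero.mp this

lemma aux_key {n : ℕ} (P X : Matrix (Fin n) (Fin n) ℝ)
    (hs : Pᵀ = P) (hp : P * P = P) :
    (Xᵀ * (P * X + X * P - (2 : ℝ) • (P * X * P))).trace
      = ((P * X - X * P)ᵀ * (P * X - X * P)).trace := by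
  have c1 : (P * (Xᵀ * (P * X))).trace = (Xᵀ * (P * (X * P))).trace := by
    rw [Matrix.trace_mul_comm P (Xᵀ * (P * X))]
    simp [Matrix.mul_assoc]
  have c2 : (P * (Xᵀ * (X * P))).trace = (Xᵀ * (X * P)).trace := by
    rw [Matrix.trace_mul_comm P (Xᵀ * (X * P)), Matrix.mul_assoc Xᵀ (X * P) P,
      Matrix.mul_assoc X P P, hp]
  have c3 : (Xᵀ * (P * (P * X))).trace = (Xᵀ * (P * X)).trace := by
    rw [← Matrix.mul_assoc P P, hp]
  rw [Matrix.transpose_sub, Matrix.transpose_mul, Matrix.transpose_mul, hs]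
  rw [Matrix.sub_mul, Matrix.mul_sub, Matrix.mul_sub]
  rw [Matrix.mul_add, Matrix.mul_sub]
  simp only [Matrix.mul_smul, Matrix.trace_sub, Matrix.trace_add, Matrix.trace_smul,
    smul_eq_mul, Matrix.mul_assoc] at *
  rw [c1, c2, c3]
  ring

lemma aux_decomp {n m : ℕ} (hm : 0 < m)
    (P : Fin m → Matrix (Fin n) (Fin n) ℝ)
    (EP : Matrix (Fin n) (Fin n) ℝ) (hEP : EP = (1 / (m : ℝ)) • ∑ i, P i)
    (B C : Matrix (Fin n) (Fin n) ℝ → Matrix (Fin n) (Fin n) ℝ)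
    (hB : ∀ X, B X = EP * X + X * EP)
    (hC : ∀ X, C X = (1 / (m : ℝ)) • ∑ i, P i * X * P i)
    (X : Matrix (Fin n) (Fin n) ℝ) :
    B X - (2 : ℝ) • C X
      = (1 / (m : ℝ)) • ∑ i, (P i * X + X * P i - (2 : ℝ) • (P i * X * P i)) := by
  rw [hB, hC, hEP]
  simp only [Matrix.smul_mul, Matrix.mul_smul, Finset.sum_mul, Finset.mul_sum,
    Finset.smul_sum, Finset.sum_sub_distrib, Finset.sum_add_distrib, smul_add, smul_sub,
    smul_comm (2 : ℝ) (1 / (m : ℝ))]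

/-- The superoperator `B − 2C` annihilates the identity matrix,
`B(I) − 2C(I) = 0`, and its smallest eigenvalue is exactly `0`: `⟨X, (B − 2C)(X)⟩ ≥ 0` for
all `n × n` matrices `X`, with equality attained at `X = I`. -/
theorem stmt_11 {n m : ℕ} (hn : 0 < n) (hm : 0 < m)
    (P : Fin m → Matrix (Fin n) (Fin n) ℝ)
    (hPsym : ∀ i, (P i)ᵀ = P i) (hPproj : ∀ i, P i * P i = P i)
    (EP : Matrix (Fin n) (Fin n) ℝ) (hEP : EP = (1 / (m : ℝ)) • ∑ i, P i)
    (B C : Matrix (Fin n) (Fin n) ℝ → Matrix (Fin n) (Fin n) ℝ)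
    (hB : ∀ X, B X = EP * X + X * EP)
    (hC : ∀ X, C X = (1 / (m : ℝ)) • ∑ i, P i * X * P i) :
    B 1 - (2 : ℝ) • C 1 = 0 ∧
    (∀ X : Matrix (Fin n) (Fin n) ℝ, 0 ≤ (Xᵀ * (B X - (2 : ℝ) • C X)).trace) ∧
    ((1 : Matrix (Fin n) (Fin n) ℝ)ᵀ * (B 1 - (2 : ℝ) • C 1)).trace = 0 ∧
    IsLeast {r : ℝ | ∃ X : Matrix (Fin n) (Fin n) ℝ, X ≠ 0 ∧ B X - (2 : ℝ) • C X = r • X}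
      0 := by
  have hC1 : C 1 = EP := by
    rw [hC, hEP]
    simp [hPproj]
  have hzero : B 1 - (2 : ℝ) • C 1 = 0 := by
    rw [hB, Matrix.mul_one, Matrix.one_mul, hC1, two_smul]
    abel
  have hnonneg : ∀ X : Matrix (Fin n) (Fin n) ℝ,
      0 ≤ (Xᵀ * (B X - (2 : ℝ) • C X)).trace := by
    intro X
    rw [aux_decomp hm P EP hEP B C hB hC, Matrix.mul_smul, Finset.mul_sum,
      Matrix.trace_smul, Matrix.trace_sum]
    apply smul_nonneg (by positivity)
    apply Finset.sum_nonneg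
    intro i _
    rw [aux_key (P i) X (hPsym i) (hPproj i)]
    exact aux_trace_sq_nonneg _
  have hone : (1 : Matrix (Fin n) (Fin n) ℝ) ≠ 0 := by
    intro h
    have h00 : (1 : Matrix (Fin n) (Fin n) ℝ) ⟨0, hn⟩ ⟨0, hn⟩ = 0 := by rw [h]; rfl
    simp [Matrix.one_apply] at h00
  refine ⟨hzero, hnonneg, by rw [hzero]; simp, ?_, ?_⟩
  · exact ⟨1, hone, by rw [hzero, zero_smul]⟩
  · rintro r ⟨X, hX, hrX⟩
    have h1 := hnonneg X
    rw [hrX, Matrix.mul_smul, Matrix.trace_smul, smul_eq_mul] at h1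
    have h2 : 0 < (Xᵀ * X).trace :=
      (aux_trace_sq_nonneg X).lt_of_ne (fun h => hX (aux_trace_sq_eq_zero X h.symm))
    rw [mul_comm] at h1
    exact nonneg_of_mul_nonneg_right h1 h2
end

section
/- Let μ₁, ξ, π be real numbers with 0 < μ₁, μ₁² ≤ ξ ≤ μ₁, and μ₁ ≤ π, let ω ∈ [0, 2], and for σ ∈ [0, π] set α(σ) := (π − σ)·(1 − ξ/μ₁) and M(σ) := [[2π − ω·(α(σ) + σ), −ω·√(α(σ)·ξ)], [−ω·√(α(σ)·ξ), 2μ₁ − ω·ξ]]. Then the smaller eigenvalue of the 2×2 symmetric matrix M(σ) is a nondecreasing function of σ on [0, π]; in particular λ_min(M(σ)) ≥ λ_min(M(0)) for all σ ∈ [0, π]. -/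
open Matrix

set_option maxHeartbeats 1000000

private lemma sqrt_gap_aux (E₁ E₂ δ K : ℝ) (hE₂ : 0 ≤ E₂) (hδ : 0 ≤ δ)
    (hK : Real.sqrt E₂ ≤ K) (h : E₂ + δ * K + (δ / 2) ^ 2 ≤ E₁) :
    Real.sqrt E₂ + δ / 2 ≤ Real.sqrt E₁ := by
  have hs := Real.sq_sqrt hE₂
  have hn := Real.sqrt_nonneg E₂
  have hδK : δ * Real.sqrt E₂ ≤ δ * K := mul_le_mul_of_nonneg_left hK hδ
  have hE₁ : 0 ≤ E₁ := by nlinarith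
  refine (Real.le_sqrt (by linarith) hE₁).mpr ?_
  nlinarith

/-- Let `0 < μ₁`, `μ₁² ≤ ξ ≤ μ₁`, `μ₁ ≤ π` and `ω ∈ [0, 2]`. For
`σ ∈ [0, π]` set `α(σ) := (π − σ)(1 − ξ/μ₁)` and
`M(σ) := [[2π − ω(α(σ) + σ), −ω√(α(σ)ξ)], [−ω√(α(σ)ξ), 2μ₁ − ωξ]]`. Then the smaller
eigenvalue `λ_min(M(σ)) = tr(M(σ))/2 − √((tr(M(σ))/2)² − det M(σ))` is nondecreasing in `σ`
on `[0, π]`; in particular `λ_min(M(σ)) ≥ λ_min(M(0))` for all `σ ∈ [0, π]`. -/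
theorem stmt_14 (μ₁ ξ π ω : ℝ) (hμ₁ : 0 < μ₁) (hξl : μ₁ ^ 2 ≤ ξ) (hξu : ξ ≤ μ₁)
    (hπ : μ₁ ≤ π) (hω : ω ∈ Set.Icc (0 : ℝ) 2)
    (α : ℝ → ℝ) (hα : ∀ σ, α σ = (π - σ) * (1 - ξ / μ₁))
    (M : ℝ → Matrix (Fin 2) (Fin 2) ℝ)
    (hM : ∀ σ, M σ = !![2 * π - ω * (α σ + σ), -(ω * Real.sqrt (α σ * ξ));
                        -(ω * Real.sqrt (α σ * ξ)), 2 * μ₁ - ω * ξ])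
    (lam : Matrix (Fin 2) (Fin 2) ℝ → ℝ)
    (hlam : ∀ A : Matrix (Fin 2) (Fin 2) ℝ,
      lam A = A.trace / 2 - Real.sqrt ((A.trace / 2) ^ 2 - A.det)) :
    MonotoneOn (fun σ => lam (M σ)) (Set.Icc 0 π) ∧
    ∀ σ ∈ Set.Icc (0 : ℝ) π, lam (M 0) ≤ lam (M σ) := by
  obtain ⟨hω0, hω2⟩ := hω
  have hξ0 : 0 < ξ := lt_of_lt_of_le (by positivity) hξl
  have hπ0 : 0 < π := lt_of_lt_of_le hμ₁ hπ
  set r : ℝ := ξ / μ₁ with hrdef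
  have hr : μ₁ * r = ξ := mul_div_cancel₀ ξ hμ₁.ne'
  have hr0 : 0 ≤ r := le_of_lt (div_pos hξ0 hμ₁)
  have hc : 0 ≤ 1 - r := by
    have : r ≤ 1 := (div_le_one hμ₁).mpr hξu
    linarith
  -- closed form of lam (M σ)
  have hform : ∀ σ, 0 ≤ σ → σ ≤ π →
      lam (M σ) = ((2 * π - ω * (α σ + σ)) + (2 * μ₁ - ω * ξ)) / 2 -
        Real.sqrt ((((2 * π - ω * (α σ + σ)) - (2 * μ₁ - ω * ξ)) / 2) ^ 2
          + ω ^ 2 * (α σ * ξ)) := by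
    intro σ h0 hσπ
    have hαnn : 0 ≤ α σ * ξ := by
      rw [hα]
      exact mul_nonneg (mul_nonneg (by linarith) hc) hξ0.le
    have hsq : Real.sqrt (α σ * ξ) * Real.sqrt (α σ * ξ) = α σ * ξ :=
      Real.mul_self_sqrt hαnn
    have harg : (((2 * π - ω * (α σ + σ)) + (2 * μ₁ - ω * ξ)) / 2) ^ 2 -
        ((2 * π - ω * (α σ + σ)) * (2 * μ₁ - ω * ξ) -
          (-(ω * Real.sqrt (α σ * ξ))) * (-(ω * Real.sqrt (α σ * ξ)))) =
        (((2 * π - ω * (α σ + σ)) - (2 * μ₁ - ω * ξ)) / 2) ^ 2 + ω ^ 2 * (α σ * ξ) := by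
      linear_combination (ω ^ 2) * hsq
    rw [hlam, hM, Matrix.trace_fin_two_of, Matrix.det_fin_two_of, harg]
  -- key monotonicity step
  have key : ∀ σ₁ ∈ Set.Icc (0:ℝ) π, ∀ σ₂ ∈ Set.Icc (0:ℝ) π, σ₁ ≤ σ₂ →
      lam (M σ₁) ≤ lam (M σ₂) := by
    rintro σ₁ ⟨h10, h1π⟩ σ₂ ⟨h20, h2π⟩ h12
    rw [hform σ₁ h10 h1π, hform σ₂ h20 h2π]
    have hα1 : α σ₁ = (π - σ₁) * (1 - r) := hα σ₁
    have hα2 : α σ₂ = (π - σ₂) * (1 - r) := hα σ₂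
    set a₁ : ℝ := 2 * π - ω * (α σ₁ + σ₁) with ha1
    set a₂ : ℝ := 2 * π - ω * (α σ₂ + σ₂) with ha2
    set d : ℝ := 2 * μ₁ - ω * ξ with hd
    set E₁ : ℝ := ((a₁ - d) / 2) ^ 2 + ω ^ 2 * (α σ₁ * ξ) with hE1
    set E₂ : ℝ := ((a₂ - d) / 2) ^ 2 + ω ^ 2 * (α σ₂ * ξ) with hE2
    set K : ℝ := ω * (1 - r) * μ₁ + (a₂ - d) / 2 with hK
    have hα2nn : 0 ≤ α σ₂ * ξ := by
      rw [hα2]; exact mul_nonneg (mul_nonneg (by linarith) hc) hξ0.le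
    have hE2nn : 0 ≤ E₂ := add_nonneg (sq_nonneg _) (by positivity)
    have hδeq : a₁ - a₂ = ω * (σ₂ - σ₁) * r := by
      rw [ha1, ha2, hα1, hα2]; ring
    have hδ : 0 ≤ a₁ - a₂ := by
      rw [hδeq]
      exact mul_nonneg (mul_nonneg hω0 (by linarith)) hr0
    have hK0 : 0 ≤ K := by
      have heq1 : 2 * K = (2 - ω) * (π - μ₁) + ω * ((π - σ₂) * r) + ω * (μ₁ - ξ) +
          (-2 * ω) * (μ₁ * r - ξ) := by
        rw [hK, ha2, hd, hα2]; ring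
      have hp1 : 0 ≤ (2 - ω) * (π - μ₁) := mul_nonneg (by linarith) (by linarith)
      have hp2 : 0 ≤ ω * ((π - σ₂) * r) := mul_nonneg hω0 (mul_nonneg (by linarith) hr0)
      have hp3 : 0 ≤ ω * (μ₁ - ξ) := mul_nonneg hω0 (by linarith)
      have hp4 : μ₁ * r - ξ = 0 := by rw [hr]; ring
      rw [hp4] at heq1
      linarith
    have hEK : E₂ ≤ K ^ 2 := by
      have heq2 : K ^ 2 - E₂ = ω * (1 - r) * μ₁ * ((2 - ω) * (π - μ₁)) +
          (ω ^ 2 * (1 - r) * (π - σ₂) - ω ^ 2 * (1 - r) * μ₁) * (μ₁ * r - ξ) := by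
        rw [hK, hE2, ha2, hd, hα2]; ring
      have hp4 : μ₁ * r - ξ = 0 := by rw [hr]; ring
      rw [hp4, mul_zero, add_zero] at heq2
      nlinarith [mul_nonneg (mul_nonneg (mul_nonneg hω0 hc) hμ₁.le)
        (mul_nonneg (by linarith : (0:ℝ) ≤ 2 - ω) (by linarith : (0:ℝ) ≤ π - μ₁))]
    have hKs : Real.sqrt E₂ ≤ K :=
      (Real.sqrt_le_sqrt hEK).trans (le_of_eq (Real.sqrt_sq hK0))
    have hmain : E₂ + (a₁ - a₂) * K + ((a₁ - a₂) / 2) ^ 2 ≤ E₁ := by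
      have heq3 : E₂ + (a₁ - a₂) * K + ((a₁ - a₂) / 2) ^ 2 - E₁ =
          ω ^ 2 * (1 - r) * (σ₂ - σ₁) * (μ₁ * r - ξ) := by
        rw [hE1, hE2, hK, ha1, ha2, hd, hα1, hα2]; ring
      have hp4 : μ₁ * r - ξ = 0 := by rw [hr]; ring
      rw [hp4, mul_zero] at heq3
      linarith
    have hgap := sqrt_gap_aux E₁ E₂ (a₁ - a₂) K hE2nn hδ hKs hmain
    linarith
  exact ⟨fun σ₁ h1 σ₂ h2 h12 => key σ₁ h1 σ₂ h2 h12,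
    fun σ hσ => key 0 ⟨le_refl 0, hπ0.le⟩ σ hσ hσ.1⟩
end

section
/- Let μ₁, ξ be real numbers with 0 < μ₁ and μ₁² ≤ ξ ≤ μ₁, let ω ∈ [0, 2], and for π ≥ μ₁ set γ(π) := π·(1 − ξ/μ₁) and N(π) := [[2π − ω·γ(π), −ω·√(γ(π)·ξ)], [−ω·√(γ(π)·ξ), 2μ₁ − ω·ξ]]. Then the smaller eigenvalue of the 2×2 symmetric matrix N(π) is a nondecreasing function of π on [μ₁, ∞): for μ₁ ≤ π ≤ π', λ_min(N(π)) ≤ λ_min(N(π')). -/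
open Matrix

lemma sqrt_aux (E E' Δ : ℝ) (hE : 0 ≤ E) (hΔ : 0 ≤ Δ)
    (h : E' ≤ E + 2*Δ*Real.sqrt E + Δ^2) : Real.sqrt E' ≤ Δ + Real.sqrt E := by
  have h1 : 0 ≤ Δ + Real.sqrt E := add_nonneg hΔ (Real.sqrt_nonneg E)
  rw [show Δ + Real.sqrt E = Real.sqrt ((Δ + Real.sqrt E)^2) from (Real.sqrt_sq h1).symm]
  apply Real.sqrt_le_sqrt
  have h2 := Real.sq_sqrt hE
  nlinarith

lemma key_aux (s k u E : ℝ) (hs : 0 ≤ s) (hE : 0 ≤ E)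
    (hEd : (s*u + k)^2 ≤ s^2*E) : s*u + k ≤ s * Real.sqrt E := by
  calc s*u+k ≤ |s*u+k| := le_abs_self _
    _ = Real.sqrt ((s*u+k)^2) := (Real.sqrt_sq_eq_abs _).symm
    _ ≤ Real.sqrt (s^2*E) := Real.sqrt_le_sqrt hEd
    _ = s * Real.sqrt E := by
        rw [Real.sqrt_mul (sq_nonneg s), Real.sqrt_sq hs]

lemma main_ineq (s d₀ k π π' : ℝ) (hs : 0 ≤ s) (hk : 0 ≤ k) (hkd : k ≤ s*d₀)
    (hπ : 0 ≤ π) (hle : π ≤ π') :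
    (s*π + d₀)/2 - Real.sqrt (((s*π + d₀)/2)^2 - (s*π*d₀ - k*π)) ≤
    (s*π' + d₀)/2 - Real.sqrt (((s*π' + d₀)/2)^2 - (s*π'*d₀ - k*π')) := by
  have hX : ((s*π + d₀)/2)^2 - (s*π*d₀ - k*π) = ((s*π - d₀)/2)^2 + k*π := by ring
  have hX' : ((s*π' + d₀)/2)^2 - (s*π'*d₀ - k*π') = ((s*π' - d₀)/2)^2 + k*π' := by ring
  rw [hX, hX']
  have hE : 0 ≤ ((s*π - d₀)/2)^2 + k*π :=
    add_nonneg (sq_nonneg _) (mul_nonneg hk hπ)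
  have hkey : s*((s*π - d₀)/2) + k ≤ s * Real.sqrt (((s*π - d₀)/2)^2 + k*π) := by
    apply key_aux _ _ _ _ hs hE
    nlinarith [mul_nonneg hk (sub_nonneg.2 hkd)]
  have hΔ : 0 ≤ s*(π' - π)/2 :=
    div_nonneg (mul_nonneg hs (sub_nonneg.2 hle)) (by norm_num)
  have h := sqrt_aux (((s*π - d₀)/2)^2 + k*π) (((s*π' - d₀)/2)^2 + k*π') (s*(π' - π)/2)
    hE hΔ (by nlinarith [mul_le_mul_of_nonneg_left hkey (sub_nonneg.2 hle)])
  linarith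

/-- Let `0 < μ₁`, `μ₁² ≤ ξ ≤ μ₁` and `ω ∈ [0, 2]`. For `π ≥ μ₁` set
`γ(π) := π(1 − ξ/μ₁)` and
`N(π) := [[2π − ωγ(π), −ω√(γ(π)ξ)], [−ω√(γ(π)ξ), 2μ₁ − ωξ]]`. Then the smaller eigenvalue
`λ_min(N(π)) = tr(N(π))/2 − √((tr(N(π))/2)² − det N(π))` is nondecreasing in `π` on
`[μ₁, ∞)`: for `μ₁ ≤ π ≤ π'` we have `λ_min(N(π)) ≤ λ_min(N(π'))`. -/
theorem stmt_15 (μ₁ ξ ω : ℝ) (hμ₁ : 0 < μ₁) (hξl : μ₁ ^ 2 ≤ ξ) (hξu : ξ ≤ μ₁)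
    (hω : ω ∈ Set.Icc (0 : ℝ) 2)
    (γ : ℝ → ℝ) (hγ : ∀ π, γ π = π * (1 - ξ / μ₁))
    (N : ℝ → Matrix (Fin 2) (Fin 2) ℝ)
    (hN : ∀ π, N π = !![2 * π - ω * γ π, -(ω * Real.sqrt (γ π * ξ));
                        -(ω * Real.sqrt (γ π * ξ)), 2 * μ₁ - ω * ξ])
    (lam : Matrix (Fin 2) (Fin 2) ℝ → ℝ)
    (hlam : ∀ A : Matrix (Fin 2) (Fin 2) ℝ,
      lam A = A.trace / 2 - Real.sqrt ((A.trace / 2) ^ 2 - A.det)) :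
    ∀ π π' : ℝ, μ₁ ≤ π → π ≤ π' → lam (N π) ≤ lam (N π') := by
  intro π π' hπ hle
  obtain ⟨hω0, hω2⟩ := hω
  have hξpos : 0 < ξ := lt_of_lt_of_le (pow_pos hμ₁ 2) hξl
  have hc : 0 ≤ 1 - ξ/μ₁ := by
    have := (div_le_one hμ₁).mpr hξu
    linarith
  have hcμ : (1 - ξ/μ₁) * μ₁ = μ₁ - ξ := by field_simp
  have hform : ∀ x : ℝ, μ₁ ≤ x →
      lam (N x) = ((2 - ω*(1 - ξ/μ₁))*x + (2*μ₁ - ω*ξ))/2 -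
        Real.sqrt ((((2 - ω*(1 - ξ/μ₁))*x + (2*μ₁ - ω*ξ))/2)^2 -
          ((2 - ω*(1 - ξ/μ₁))*x*(2*μ₁ - ω*ξ) - (ω^2*(1 - ξ/μ₁)*ξ)*x)) := by
    intro x hx
    have hx0 : 0 ≤ x := le_trans hμ₁.le hx
    rw [hlam, hN, hγ, Matrix.trace_fin_two_of, Matrix.det_fin_two_of]
    have hb2 : Real.sqrt (x*(1 - ξ/μ₁)*ξ) ^ 2 = x*(1 - ξ/μ₁)*ξ :=
      Real.sq_sqrt (mul_nonneg (mul_nonneg hx0 hc) hξpos.le)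
    congr 1
    · ring
    · congr 1
      linear_combination (ω^2) * hb2
  rw [hform π hπ, hform π' (le_trans hπ hle)]
  apply main_ineq
  · nlinarith
  · positivity
  · nlinarith
  · linarith
  · exact hle
end
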